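/- If the Angel has a winning strategy in the loop-free multigraph game from every loop-free starting position with graphical degree sequence, then the Angel has a winning strategy in the loopy multigraph game from every loopy multigraph starting position with graphical degree sequence. -/
import Mathlib


open Finset

/-- A loopy multigraph on vertex set `V`: each unordered pair (possibly a loop)
has a multiplicity. -/
abbrev Multigraph (V : Type*) := Sym2 V → ℕ

variable {V : Type*}

/-- The degree of a vertex: each incident edge counts with multiplicity,
and a loop counts twice. -/
def mdeg [Fintype V] (G : Multigraph V) (v : V) : ℕ :=
  (∑ u : V, G s(v, u)) + G s(v, v)

/-- A multigraph is simple if it has no loops and every multiplicity is at most one. -/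
def IsSimpleMG (G : Multigraph V) : Prop :=
  (∀ v : V, G s(v, v) = 0) ∧ ∀ e : Sym2 V, G e ≤ 1

/-- A multigraph is loop-free if it has no loops. -/
def LoopFree (G : Multigraph V) : Prop := ∀ v : V, G s(v, v) = 0

/-- A degree function is graphical if it is realized by some simple graph. -/
def GraphicalDeg [Fintype V] (d : V → ℕ) : Prop :=
  ∃ H : Multigraph V, IsSimpleMG H ∧ ∀ v : V, mdeg H v = d v

/-- The result of the double edge swap removing one copy each of `{v1,v2}` and
`{v3,v4}` and adding one copy each of `{v2,v3}` and `{v4,v1}`. -/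
def swapped [DecidableEq V] (G : Multigraph V) (v1 v2 v3 v4 : V) : Multigraph V :=
  fun e => G e - (if e = s(v1, v2) then 1 else 0) - (if e = s(v3, v4) then 1 else 0)
    + (if e = s(v2, v3) then 1 else 0) + (if e = s(v4, v1) then 1 else 0)

/-- The edges `{v1,v2}` and `{v3,v4}` share no vertex. -/
def NotIncident (v1 v2 v3 v4 : V) : Prop :=
  v1 ≠ v3 ∧ v1 ≠ v4 ∧ v2 ≠ v3 ∧ v2 ≠ v4

/-- One admissible double edge swap: the two removed edges exist, are not incident,
and at least one of them is a loop or has multiplicity at least two. -/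
def AdmissibleStep [DecidableEq V] (G G' : Multigraph V) : Prop :=
  ∃ v1 v2 v3 v4 : V, NotIncident v1 v2 v3 v4 ∧
    1 ≤ G s(v1, v2) ∧ 1 ≤ G s(v3, v4) ∧
    (v1 = v2 ∨ v3 = v4 ∨ 2 ≤ G s(v1, v2) ∨ 2 ≤ G s(v3, v4)) ∧
    G' = swapped G v1 v2 v3 v4

/-- The Angel wins the loop-free multigraph game from `G`: either `G` is simple, or
for every Devil choice of a multiple edge `{v1,v2}` the Angel can pick a non-incident
edge `{v3,v4}`, swap, and still be winning. (Being an inductive predicate, this means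
the Angel forces a simple graph in finitely many steps.) -/
inductive AngelWinsLF {V : Type*} [DecidableEq V] : Multigraph V → Prop where
  | win (G : Multigraph V) : IsSimpleMG G → AngelWinsLF G
  | move (G : Multigraph V) (f3 f4 : V → V → V) :
      (∀ v1 v2 : V, v1 ≠ v2 → 2 ≤ G s(v1, v2) →
        NotIncident v1 v2 (f3 v1 v2) (f4 v1 v2) ∧ 1 ≤ G s(f3 v1 v2, f4 v1 v2)) →
      (∀ v1 v2 : V, v1 ≠ v2 → 2 ≤ G s(v1, v2) →
        AngelWinsLF (swapped G v1 v2 (f3 v1 v2) (f4 v1 v2))) →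
      AngelWinsLF G

/-- The Angel wins the loopy multigraph game from `G`: either `G` is simple, or for
every Devil choice of a loop or multiple edge `{v1,v2}` the Angel can pick any edge
`{v3,v4}` (with multiplicity two required if it is of the same type as the Devil's
edge), swap, and still be winning. -/
inductive AngelWinsLoopy {V : Type*} [DecidableEq V] : Multigraph V → Prop where
  | win (G : Multigraph V) : IsSimpleMG G → AngelWinsLoopy G
  | move (G : Multigraph V) (f3 f4 : V → V → V) :
      (∀ v1 v2 : V, 1 ≤ G s(v1, v2) → (v1 = v2 ∨ 2 ≤ G s(v1, v2)) →
        1 ≤ G s(f3 v1 v2, f4 v1 v2) ∧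
          (s(f3 v1 v2, f4 v1 v2) = s(v1, v2) → 2 ≤ G s(v1, v2))) →
      (∀ v1 v2 : V, 1 ≤ G s(v1, v2) → (v1 = v2 ∨ 2 ≤ G s(v1, v2)) →
        AngelWinsLoopy (swapped G v1 v2 (f3 v1 v2) (f4 v1 v2))) →
      AngelWinsLoopy G


section AngelAux

variable [Fintype V] [DecidableEq V]

set_option linter.unusedSectionVars false in
/-- ℓ¹ distance between two multigraphs. -/
private def mdist (G H : Multigraph V) : ℕ :=
  ∑ e : Sym2 V, ((G e : ℤ) - (H e : ℤ)).natAbs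

set_option linter.unusedSectionVars false in
private lemma exists_under (G H : Multigraph V) (v1 v2 : V)
    (hdeg : mdeg G v1 = mdeg H v1) (hover : H s(v1, v2) < G s(v1, v2)) :
    ∃ x, G s(v1, x) < H s(v1, x) := by
  by_contra hc
  push_neg at hc
  have hsum : ∑ u : V, H s(v1, u) < ∑ u : V, G s(v1, u) :=
    Finset.sum_lt_sum (fun i _ => hc i) ⟨v2, Finset.mem_univ _, hover⟩
  have h2 := hc v1
  unfold mdeg at hdeg
  omega

set_option linter.unusedSectionVars false in
private lemma swapped_cast (G : Multigraph V) (v1 v2 v3 v4 : V)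
    (h12 : 1 ≤ G s(v1, v2)) (h34 : 1 ≤ G s(v3, v4)) (hne : s(v1, v2) ≠ s(v3, v4)) (e : Sym2 V) :
    ((swapped G v1 v2 v3 v4 e : ℤ)) =
      (G e : ℤ) - (if e = s(v1, v2) then 1 else 0) - (if e = s(v3, v4) then 1 else 0)
        + (if e = s(v2, v3) then 1 else 0) + (if e = s(v4, v1) then 1 else 0) := by
  have hA : (if e = s(v1, v2) then 1 else 0) + (if e = s(v3, v4) then 1 else 0) ≤ G e := by
    by_cases h1 : e = s(v1, v2)
    · have h2 : e ≠ s(v3, v4) := fun h => hne (h1.symm.trans h)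
      subst h1; simp [h2, h12]
    · by_cases h2 : e = s(v3, v4)
      · subst h2; simp [h1, h34]
      · simp [h1, h2]
  show ((G e - (if e = s(v1, v2) then 1 else 0) - (if e = s(v3, v4) then 1 else 0)
      + (if e = s(v2, v3) then 1 else 0) + (if e = s(v4, v1) then 1 else 0) : ℕ) : ℤ) = _
  rw [Nat.sub_sub]
  push_cast [Nat.cast_sub hA]
  by_cases h1 : e = s(v1, v2) <;> by_cases h2 : e = s(v3, v4) <;>
    by_cases h3 : e = s(v2, v3) <;> by_cases h4 : e = s(v4, v1) <;>
    simp [h1, h2, h3, h4] <;> ring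

set_option linter.unusedSectionVars false in
private lemma count_aux (v x y : V) :
    ((∑ u : V, (if s(v, u) = s(x, y) then (1 : ℤ) else 0))
        + (if s(v, v) = s(x, y) then (1 : ℤ) else 0))
      = (if v = x then 1 else 0) + (if v = y then 1 else 0) := by
  by_cases hvx : v = x <;> by_cases hvy : v = y
  · subst hvx; subst hvy
    simp [Sym2.eq_iff]
  · subst hvx
    simp [Sym2.eq_iff, hvy, Ne.symm hvy]
  · subst hvy
    simp [Sym2.eq_iff, hvx, Ne.symm hvx]
  · simp [Sym2.eq_iff, hvx, hvy]

set_option linter.unusedSectionVars false in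
private lemma mdeg_swapped (G : Multigraph V) (v1 v2 v3 v4 : V)
    (h12 : 1 ≤ G s(v1, v2)) (h34 : 1 ≤ G s(v3, v4)) (hne : s(v1, v2) ≠ s(v3, v4)) (v : V) :
    mdeg (swapped G v1 v2 v3 v4) v = mdeg G v := by
  have key : (mdeg (swapped G v1 v2 v3 v4) v : ℤ) = (mdeg G v : ℤ) := by
    unfold mdeg
    push_cast
    simp only [swapped_cast G v1 v2 v3 v4 h12 h34 hne]
    rw [Finset.sum_add_distrib, Finset.sum_add_distrib, Finset.sum_sub_distrib,
      Finset.sum_sub_distrib]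
    have c1 := count_aux v v1 v2
    have c2 := count_aux v v3 v4
    have c3 := count_aux v v2 v3
    have c4 := count_aux v v4 v1
    linarith
  exact_mod_cast key

set_option linter.unusedSectionVars false in
private lemma mdist_lt (G H : Multigraph V) (v1 v2 z x : V)
    (hover1 : H s(v1, v2) < G s(v1, v2))
    (hover2 : H s(z, x) < G s(z, x))
    (hG4 : G s(x, v1) = 0) (hH4 : H s(x, v1) = 1)
    (hE12 : s(v1, v2) ≠ s(z, x))
    (hE31 : s(v2, z) ≠ s(v1, v2)) (hE32 : s(v2, z) ≠ s(z, x)) :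
    mdist (swapped G v1 v2 z x) H < mdist G H := by
  have h12 : 1 ≤ G s(v1, v2) := by omega
  have h34 : 1 ≤ G s(z, x) := by omega
  have hE41 : s(x, v1) ≠ s(v1, v2) := fun h => by rw [h] at hG4; omega
  have hE42 : s(x, v1) ≠ s(z, x) := fun h => by rw [h] at hG4; omega
  have pointwise : ∀ e : Sym2 V,
      ((swapped G v1 v2 z x e : ℤ) - (H e : ℤ)).natAbs
          + (if e = s(v1, v2) then 1 else 0) + (if e = s(z, x) then 1 else 0)
        ≤ ((G e : ℤ) - (H e : ℤ)).natAbs + (if e = s(v2, z) then 1 else 0) := by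
    intro e
    have hc := swapped_cast G v1 v2 z x h12 h34 hE12 e
    by_cases he1 : e = s(v1, v2)
    · subst he1
      simp only [eq_self_iff_true, if_true, if_pos rfl, if_neg hE12, if_neg (Ne.symm hE31),
        if_neg (Ne.symm hE41)] at hc ⊢
      omega
    · by_cases he2 : e = s(z, x)
      · subst he2
        simp only [eq_self_iff_true, if_true, if_pos rfl, if_neg (Ne.symm hE12),
          if_neg (Ne.symm hE32), if_neg (Ne.symm hE42)] at hc ⊢
        omega
      · by_cases he3 : e = s(v2, z)
        · subst he3
          by_cases he4 : s(v2, z) = s(x, v1)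
          · have g0 : G s(v2, z) = 0 := by rw [he4]; exact hG4
            have h1 : H s(v2, z) = 1 := by rw [he4]; exact hH4
            simp only [eq_self_iff_true, if_true, if_pos rfl, if_neg hE31, if_neg hE32,
              if_pos he4] at hc ⊢
            omega
          · simp only [eq_self_iff_true, if_true, if_pos rfl, if_neg hE31, if_neg hE32,
              if_neg he4] at hc ⊢
            omega
        · by_cases he4 : e = s(x, v1)
          · subst he4
            simp only [eq_self_iff_true, if_true, if_pos rfl, if_neg hE41, if_neg hE42,
              if_neg he3] at hc ⊢
            omega
          · simp only [if_neg he1, if_neg he2, if_neg he3, if_neg he4] at hc ⊢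
            omega
  have hsum := Finset.sum_le_sum (fun e (_ : e ∈ (univ : Finset (Sym2 V))) => pointwise e)
  simp only [Finset.sum_add_distrib] at hsum
  rw [Finset.sum_ite_eq' univ (s(v1, v2)) (fun _ => 1),
    Finset.sum_ite_eq' univ (s(z, x)) (fun _ => 1),
    Finset.sum_ite_eq' univ (s(v2, z)) (fun _ => 1)] at hsum
  simp only [Finset.mem_univ, if_pos] at hsum
  unfold mdist
  omega

set_option linter.unusedSectionVars false in
/-- The Angel's response: given a fixed simple realization `H` of the degree sequence and a
valid Devil pick `{v1,v2}`, there is a response `{z,x}` whose swap strictly decreases the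
distance to `H` and preserves degrees. -/
private lemma response (G H : Multigraph V) (hH : IsSimpleMG H)
    (hdeg : ∀ v, mdeg G v = mdeg H v) (v1 v2 : V)
    (h1 : 1 ≤ G s(v1, v2)) (h2 : v1 = v2 ∨ 2 ≤ G s(v1, v2)) :
    ∃ z x : V, 1 ≤ G s(z, x) ∧ s(z, x) ≠ s(v1, v2) ∧
      (∀ v, mdeg (swapped G v1 v2 z x) v = mdeg G v) ∧
      mdist (swapped G v1 v2 z x) H < mdist G H := by
  have hover1 : H s(v1, v2) < G s(v1, v2) := by
    rcases h2 with h2 | h2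
    · subst h2
      have := hH.1 v1
      omega
    · have := hH.2 s(v1, v2)
      omega
  obtain ⟨x, hx⟩ := exists_under G H v1 v2 (hdeg v1) hover1
  have hHx : H s(v1, x) = 1 := le_antisymm (hH.2 _) (by omega)
  have hGx : G s(v1, x) = 0 := by omega
  have hxv1 : x ≠ v1 := by
    intro h
    subst h
    have := hH.1 x
    omega
  have hxv2 : x ≠ v2 := by
    intro h
    subst h
    omega
  have hxv1' : G s(x, v1) = 0 := by rw [Sym2.eq_swap]; exact hGx
  have hHx' : H s(x, v1) = 1 := by rw [Sym2.eq_swap]; exact hHx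
  obtain ⟨z, hz⟩ := exists_under H G x v1 (hdeg x).symm (by rw [Sym2.eq_swap]; omega)
  have hzv1 : z ≠ v1 := by
    intro h
    subst h
    omega
  have hGzx : 1 ≤ G s(z, x) := by rw [Sym2.eq_swap]; omega
  have hoverzx : H s(z, x) < G s(z, x) := by
    rw [show s(z, x) = s(x, z) from Sym2.eq_swap]
    exact hz
  have hE12 : s(v1, v2) ≠ s(z, x) := by
    intro h
    rw [Sym2.eq_iff] at h
    rcases h with ⟨ha, _⟩ | ⟨ha, _⟩
    · exact hzv1 ha.symm
    · exact hxv1 ha.symm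
  have hE31 : s(v2, z) ≠ s(v1, v2) := by
    intro h
    rw [Sym2.eq_iff] at h
    rcases h with ⟨ha, hb⟩ | ⟨_, hb⟩
    · exact hzv1 (hb.trans ha)
    · exact hzv1 hb
  have hE32 : s(v2, z) ≠ s(z, x) := by
    intro h
    rw [Sym2.eq_iff] at h
    rcases h with ⟨ha, hb⟩ | ⟨ha, _⟩
    · exact hxv2 (hb.symm.trans ha.symm)
    · exact hxv2 ha.symm
  refine ⟨z, x, hGzx, hE12.symm, fun v => mdeg_swapped G v1 v2 z x (by omega) hGzx hE12 v, ?_⟩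
  exact mdist_lt G H v1 v2 z x hover1 hoverzx hxv1' hHx' hE12 hE31 hE32

set_option linter.unusedSectionVars false in
private lemma angel_wins_of_dist (H : Multigraph V) (hH : IsSimpleMG H) :
    ∀ n (G : Multigraph V), (∀ v, mdeg G v = mdeg H v) → mdist G H ≤ n →
      AngelWinsLoopy G := by
  intro n
  induction n with
  | zero =>
    intro G hdeg hd
    have hG : G = H := by
      funext e
      have h0 : mdist G H = 0 := Nat.le_zero.mp hd
      have := Finset.sum_eq_zero_iff.mp h0 e (Finset.mem_univ e)
      omega
    exact AngelWinsLoopy.win G (hG ▸ hH)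
  | succ n ih =>
    intro G hdeg hd
    classical
    refine AngelWinsLoopy.move G
      (fun v1 v2 =>
        if h : 1 ≤ G s(v1, v2) ∧ (v1 = v2 ∨ 2 ≤ G s(v1, v2)) then
          (response G H hH hdeg v1 v2 h.1 h.2).choose
        else v1)
      (fun v1 v2 =>
        if h : 1 ≤ G s(v1, v2) ∧ (v1 = v2 ∨ 2 ≤ G s(v1, v2)) then
          (response G H hH hdeg v1 v2 h.1 h.2).choose_spec.choose
        else v1) ?_ ?_
    · intro v1 v2 h1 h2
      simp only [dif_pos (⟨h1, h2⟩ : 1 ≤ G s(v1, v2) ∧ (v1 = v2 ∨ 2 ≤ G s(v1, v2)))]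
      obtain ⟨hle, hne, -, -⟩ :=
        (response G H hH hdeg v1 v2 h1 h2).choose_spec.choose_spec
      exact ⟨hle, fun heq => absurd heq hne⟩
    · intro v1 v2 h1 h2
      simp only [dif_pos (⟨h1, h2⟩ : 1 ≤ G s(v1, v2) ∧ (v1 = v2 ∨ 2 ≤ G s(v1, v2)))]
      obtain ⟨-, -, hdeg', hdist⟩ :=
        (response G H hH hdeg v1 v2 h1 h2).choose_spec.choose_spec
      exact ih _ (fun v => (hdeg' v).trans (hdeg v)) (by omega)

end AngelAux

/-- If the Angel wins the loop-free multigraph game from every loop-free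
starting position with graphical degree sequence, then the Angel wins the loopy
multigraph game from every starting position with graphical degree sequence. -/
theorem loopfree_strategy_gives_loopy_strategy [Fintype V] [DecidableEq V]
    (h : ∀ G : Multigraph V, LoopFree G → GraphicalDeg (mdeg G) → AngelWinsLF G) :
    ∀ G : Multigraph V, GraphicalDeg (mdeg G) → AngelWinsLoopy G := by
  intro G hG
  obtain ⟨H, hH, hdeg⟩ := hG
  exact angel_wins_of_dist H hH (mdist G H) G (fun v => (hdeg v).symm) le_rfl
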